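/- Let f : 2^{[N]} → ℝ be submodular with f(∅) = 0, and let w ∈ ℝ^N with coordinates ordered as w_{π(1)} ≥ w_{π(2)} ≥ ... ≥ w_{π(N)} for a permutation π. Then the greedy vector x given by x_{π(i)} = f({π(1),...,π(i)}) - f({π(1),...,π(i-1)}) maximizes the linear functional x ↦ wᵀx over the submodular polyhedron P(f); that is, wᵀx = max_{y ∈ P(f)} wᵀy. -/

import Mathlib

/-!
Along the chain `∅ = S₀ ⊂ S₁ ⊂ ⋯ ⊂ S_N` of prefixes of `π`, the greedy vector `x` has tight
prefix sums `x(S_k) = f(S_k)`, and it lies in `P(f)` because under submodularity the marginal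
gain of an element can only shrink as the set grows. Summation by parts writes `wᵀy` as a
combination of the prefix sums `y(S_k)` with coefficients `w_{π k} - w_{π (k+1)}` and
`w_{π (N-1)}`, all nonnegative; for `y ∈ P(f)` each `y(S_k) ≤ f(S_k) = x(S_k)`, hence
`wᵀy ≤ wᵀx`.
-/

open Finset

section Submodular

variable {α : Type*}

def IsSubmodular [DecidableEq α] (f : Finset α → ℝ) : Prop :=
  ∀ A B : Finset α, f A + f B ≥ f (A ∪ B) + f (A ∩ B)

def submodularPolyhedron (f : Finset α → ℝ) : Set (α → ℝ) :=
  {y | ∀ A : Finset α, ∑ i ∈ A, y i ≤ f A}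

theorem IsSubmodular.insert_sub_le_insert_sub_of_subset [DecidableEq α] {f : Finset α → ℝ}
    (hf : IsSubmodular f) {A B : Finset α} {e : α} (hAB : A ⊆ B) (he : e ∉ B) :
    f (insert e B) - f B ≤ f (insert e A) - f A := by
  have h := hf (insert e A) B
  rw [insert_union, union_eq_right.mpr hAB, insert_inter_of_notMem he,
    inter_eq_left.mpr hAB] at h
  linarith

end Submodular

theorem sum_range_mul_nonneg_of_antitone {a b : ℕ → ℝ} {n : ℕ} (ha : Antitone a)
    (ha₀ : ∀ k, 0 ≤ a k) (hb : ∀ m ≤ n, 0 ≤ ∑ k ∈ range m, b k) :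
    0 ≤ ∑ k ∈ range n, a k * b k := by
  have hparts := sum_range_by_parts a b n
  simp only [smul_eq_mul] at hparts
  rw [hparts]
  have hlast : 0 ≤ a (n - 1) * ∑ k ∈ range n, b k := mul_nonneg (ha₀ _) (hb n le_rfl)
  have hsteps : ∑ i ∈ range (n - 1), (a (i + 1) - a i) * ∑ k ∈ range (i + 1), b k ≤ 0 :=
    sum_nonpos fun i hi => mul_nonpos_of_nonpos_of_nonneg (sub_nonpos.mpr (ha i.le_succ))
      (hb _ (by rw [mem_range] at hi; omega))
  linarith

namespace Equiv.Perm

variable {N : ℕ} (π : Equiv.Perm (Fin N))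

def prefixSet (i : ℕ) : Finset (Fin N) :=
  univ.filter fun j => (π.symm j : ℕ) < i

@[simp]
theorem mem_prefixSet {i : ℕ} {j : Fin N} : j ∈ π.prefixSet i ↔ (π.symm j : ℕ) < i := by
  simp [prefixSet]

theorem prefixSet_zero : π.prefixSet 0 = ∅ := by
  ext
  simp

theorem prefixSet_of_le {i : ℕ} (hi : N ≤ i) : π.prefixSet i = univ := by
  ext j
  simpa using (π.symm j).isLt.trans_le hi

theorem apply_notMem_prefixSet {k : ℕ} (hk : k < N) : π ⟨k, hk⟩ ∉ π.prefixSet k := by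
  simp

theorem prefixSet_succ {k : ℕ} (hk : k < N) :
    π.prefixSet (k + 1) = insert (π ⟨k, hk⟩) (π.prefixSet k) := by
  ext j
  simp only [mem_prefixSet, mem_insert, ← Equiv.symm_apply_eq, Fin.ext_iff]
  omega

def seq (g : Fin N → ℝ) (k : ℕ) : ℝ :=
  if hk : k < N then g (π ⟨k, hk⟩) else 0

theorem seq_of_lt (g : Fin N → ℝ) {k : ℕ} (hk : k < N) : π.seq g k = g (π ⟨k, hk⟩) :=
  dif_pos hk

theorem seq_nonneg {g : Fin N → ℝ} (hg : ∀ i, 0 ≤ g i) (k : ℕ) : 0 ≤ π.seq g k := by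
  unfold seq
  split_ifs
  exacts [hg _, le_rfl]

theorem antitone_seq {w : Fin N → ℝ} (hw : ∀ i, 0 ≤ w i)
    (hsort : ∀ i j : Fin N, i ≤ j → w (π j) ≤ w (π i)) : Antitone (π.seq w) := by
  intro k l hkl
  unfold seq
  split_ifs with hl hk hk
  · exact hsort _ _ (Fin.mk_le_mk.mpr hkl)
  · omega
  · exact hw _
  · exact le_rfl

theorem sum_mul_eq_sum_range_seq (g h : Fin N → ℝ) :
    ∑ j, g j * h j = ∑ k ∈ range N, π.seq g k * π.seq h k := by
  rw [← Fin.sum_univ_eq_sum_range (fun k => π.seq g k * π.seq h k), ← Equiv.sum_comp π]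
  simp [seq_of_lt]

theorem sum_prefixSet_eq_sum_range_seq (g : Fin N → ℝ) {m : ℕ} (hm : m ≤ N) :
    ∑ j ∈ π.prefixSet m, g j = ∑ k ∈ range m, π.seq g k := by
  induction m with
  | zero => simp [prefixSet_zero]
  | succ m ih =>
    rw [prefixSet_succ π hm, sum_insert (π.apply_notMem_prefixSet hm), ih (by omega),
      sum_range_succ, π.seq_of_lt g hm, add_comm]

theorem sum_mul_le_sum_mul_of_sum_prefixSet_le {w x y : Fin N → ℝ} (hw : ∀ i, 0 ≤ w i)
    (hsort : ∀ i j : Fin N, i ≤ j → w (π j) ≤ w (π i))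
    (hxy : ∀ m ≤ N, ∑ j ∈ π.prefixSet m, y j ≤ ∑ j ∈ π.prefixSet m, x j) :
    ∑ j, w j * y j ≤ ∑ j, w j * x j := by
  rw [← sub_nonneg, ← sum_sub_distrib]
  simp_rw [← mul_sub]
  rw [π.sum_mul_eq_sum_range_seq]
  refine sum_range_mul_nonneg_of_antitone (π.antitone_seq hw hsort) (π.seq_nonneg hw)
    fun m hm => ?_
  rw [← π.sum_prefixSet_eq_sum_range_seq _ hm, sum_sub_distrib, sub_nonneg]
  exact hxy m hm

def greedyVector (f : Finset (Fin N) → ℝ) (j : Fin N) : ℝ :=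
  f (π.prefixSet (π.symm j + 1)) - f (π.prefixSet (π.symm j))

theorem greedyVector_apply (f : Finset (Fin N) → ℝ) {k : ℕ} (hk : k < N) :
    π.greedyVector f (π ⟨k, hk⟩) = f (π.prefixSet (k + 1)) - f (π.prefixSet k) := by
  simp [greedyVector]

theorem sum_prefixSet_greedyVector {f : Finset (Fin N) → ℝ} (h0 : f ∅ = 0) {m : ℕ}
    (hm : m ≤ N) : ∑ j ∈ π.prefixSet m, π.greedyVector f j = f (π.prefixSet m) := by
  have hgains : ∀ k ∈ range m,
      π.seq (π.greedyVector f) k = f (π.prefixSet (k + 1)) - f (π.prefixSet k) := fun k hk => by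
    rw [π.seq_of_lt _ ((mem_range.mp hk).trans_le hm), greedyVector_apply]
  rw [π.sum_prefixSet_eq_sum_range_seq _ hm, sum_congr rfl hgains,
    sum_range_sub (fun k => f (π.prefixSet k)), prefixSet_zero, h0, sub_zero]

theorem sum_inter_prefixSet_greedyVector_le {f : Finset (Fin N) → ℝ} (hf : IsSubmodular f)
    (h0 : f ∅ = 0) (A : Finset (Fin N)) {m : ℕ} (hm : m ≤ N) :
    ∑ j ∈ A ∩ π.prefixSet m, π.greedyVector f j ≤ f (A ∩ π.prefixSet m) := by
  induction m with
  | zero => simp [prefixSet_zero, h0]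
  | succ m ih =>
    have hmN : m < N := hm
    have hnew := π.apply_notMem_prefixSet hmN
    rw [prefixSet_succ π hmN]
    by_cases heA : π ⟨m, hmN⟩ ∈ A
    · have hgain := hf.insert_sub_le_insert_sub_of_subset (inter_subset_right (s₁ := A)) hnew
      rw [← prefixSet_succ π hmN] at hgain
      rw [inter_insert_of_mem heA, sum_insert fun h => hnew (mem_inter.mp h).2,
        greedyVector_apply]
      linarith [ih (by omega)]
    · rw [inter_insert_of_notMem heA]
      exact ih (by omega)

theorem greedyVector_mem_submodularPolyhedron {f : Finset (Fin N) → ℝ} (hf : IsSubmodular f)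
    (h0 : f ∅ = 0) : π.greedyVector f ∈ submodularPolyhedron f := fun A => by
  simpa [π.prefixSet_of_le le_rfl] using π.sum_inter_prefixSet_greedyVector_le hf h0 A le_rfl

end Equiv.Perm

/-- for nonnegative weights `w` sorted nonincreasingly by `π`, the greedy
vector `x` maximizes `y ↦ wᵀy` over the submodular polyhedron `P(f)`:
`wᵀx` is the greatest element of the set of values `wᵀy`, `y ∈ P(f)`. -/
theorem greedy_maximizes_over_polyhedron (N : ℕ) (f : Finset (Fin N) → ℝ)
    (hf : ∀ A B : Finset (Fin N), f A + f B ≥ f (A ∪ B) + f (A ∩ B))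
    (h0 : f ∅ = 0) (π : Equiv.Perm (Fin N)) (w : Fin N → ℝ)
    (hw : ∀ i, 0 ≤ w i)
    (hsort : ∀ i j : Fin N, i ≤ j → w (π j) ≤ w (π i))
    (chain : ℕ → Finset (Fin N))
    (hchain : ∀ i, chain i = Finset.univ.filter (fun j : Fin N => (π.symm j : ℕ) < i))
    (x : Fin N → ℝ)
    (hx : ∀ j : Fin N, x j = f (chain ((π.symm j : ℕ) + 1)) - f (chain (π.symm j : ℕ))) :
    IsGreatest {v : ℝ | ∃ y : Fin N → ℝ,
        (∀ A : Finset (Fin N), ∑ i ∈ A, y i ≤ f A) ∧ v = ∑ i, w i * y i}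
      (∑ i, w i * x i) := by
  obtain rfl : chain = π.prefixSet := funext hchain
  obtain rfl : x = π.greedyVector f := funext hx
  refine ⟨⟨_, π.greedyVector_mem_submodularPolyhedron hf h0, rfl⟩, ?_⟩
  rintro _ ⟨y, hy, rfl⟩
  refine π.sum_mul_le_sum_mul_of_sum_prefixSet_le hw hsort fun m hm => ?_
  rw [π.sum_prefixSet_greedyVector h0 hm]
  exact hy _
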